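/- arXiv:2302.10017 — 8 statements merged into one kernel-verified Lean document; each statement's English description precedes it below -/
import Mathlib

section
/- Let n m : ℕ, let K ⊆ (Fin n → ℝ) be a nonempty compact set, let F : (Fin n → ℝ) → (Fin n → ℝ) satisfy F(K) ⊆ K, let ψ : (Fin n → ℝ) → (Fin m → ℝ) be continuous on K, let g : (Fin m → ℝ) → (Fin m → ℝ), let x_g ∈ K and y_g : Fin m → ℝ. Assume: (i) for every y : Fin m → ℝ, the iterates g^[k](y) converge to y_g as k → ∞; (ii) ψ(F(x)) = g(ψ(x)) for every x ∈ K (stability condition 1); (iii) for every x ∈ K, ψ(x) = y_g implies x = x_g (stability condition 2). Then x_g is globally asymptotically stable on K: for every x ∈ K, the iterates F^[k](x) converge to x_g as k → ∞. -/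
/-! Along a trajectory in `K`, `ψ (F^[k] x) = g^[k] (ψ x) → y_g`. Any cluster point `z` of the
trajectory lies in `K`, and continuity of `ψ` on `K` gives `ψ z = y_g`, hence `z = x_g`;
in a compact set, a sequence with a unique cluster point converges to it. -/

open Filter Topology Set

section Topology

variable {X Y ι : Type*} [TopologicalSpace X] [TopologicalSpace Y]

theorem MapClusterPt.continuousWithinAt_comp {K : Set X} {ψ : X → Y} {l : Filter ι} {u : ι → X}
    {z : X} (hψ : ContinuousWithinAt ψ K z) (hz : MapClusterPt z l u) (hu : ∀ᶠ i in l, u i ∈ K) :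
    MapClusterPt (ψ z) l (ψ ∘ u) :=
  hz.tendsto_comp' <| hψ.mono_left <| inf_le_inf_left _ <| le_principal_iff.2 hu

theorem IsCompact.tendsto_nhds_of_tendsto_comp [T2Space Y] {K : Set X} {ψ : X → Y}
    {l : Filter ι} {u : ι → X} {x₀ : X} {y₀ : Y} (hK : IsCompact K) (hψ : ContinuousOn ψ K)
    (hu : ∀ᶠ i in l, u i ∈ K) (hψu : Tendsto (ψ ∘ u) l (𝓝 y₀))
    (hfiber : ∀ x ∈ K, ψ x = y₀ → x = x₀) : Tendsto u l (𝓝 x₀) := by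
  refine hK.tendsto_nhds_of_unique_mapClusterPt hu fun z hzK hz => hfiber z hzK ?_
  have hψz : MapClusterPt (ψ z) l (ψ ∘ u) := hz.continuousWithinAt_comp (hψ z hzK) hu
  exact eq_of_nhds_neBot (hψz.neBot.mono (inf_le_inf_left _ hψu))

end Topology

theorem Set.MapsTo.iterate_semiconj_apply {X Y : Type*} {K : Set X} {F : X → X} {g : Y → Y}
    {ψ : X → Y} (hF : MapsTo F K K) (hψ : ∀ x ∈ K, ψ (F x) = g (ψ x)) {x : X} (hx : x ∈ K) :
    ∀ k, ψ (F^[k] x) = g^[k] (ψ x)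
  | 0 => rfl
  | k + 1 => by
    rw [Function.iterate_succ_apply', Function.iterate_succ_apply', hψ _ (hF.iterate k hx),
      hF.iterate_semiconj_apply hψ hx k]

theorem stmt0_general (n m : ℕ) (K : Set (Fin n → ℝ)) (hKc : IsCompact K)
    (F : (Fin n → ℝ) → (Fin n → ℝ)) (hF : Set.MapsTo F K K)
    (ψ : (Fin n → ℝ) → (Fin m → ℝ)) (hψ : ContinuousOn ψ K)
    (g : (Fin m → ℝ) → (Fin m → ℝ)) (x_g : Fin n → ℝ)
    (y_g : Fin m → ℝ)
    (hg : ∀ y : Fin m → ℝ, Tendsto (fun k => g^[k] y) atTop (𝓝 y_g))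
    (hcond1 : ∀ x ∈ K, ψ (F x) = g (ψ x))
    (hcond2 : ∀ x ∈ K, ψ x = y_g → x = x_g) :
    ∀ x ∈ K, Tendsto (fun k => F^[k] x) atTop (𝓝 x_g) := by
  intro x hx
  have hlatent : Tendsto (fun k => ψ (F^[k] x)) atTop (𝓝 y_g) := by
    simpa only [hF.iterate_semiconj_apply hcond1 hx] using hg (ψ x)
  exact hKc.tendsto_nhds_of_tendsto_comp hψ (Eventually.of_forall fun k => hF.iterate k hx)
    hlatent hcond2

theorem stmt0 (n m : ℕ) (K : Set (Fin n → ℝ)) (hKne : K.Nonempty) (hKc : IsCompact K)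
    (F : (Fin n → ℝ) → (Fin n → ℝ)) (hF : Set.MapsTo F K K)
    (ψ : (Fin n → ℝ) → (Fin m → ℝ)) (hψ : ContinuousOn ψ K)
    (g : (Fin m → ℝ) → (Fin m → ℝ)) (x_g : Fin n → ℝ) (hxg : x_g ∈ K)
    (y_g : Fin m → ℝ)
    (hg : ∀ y : Fin m → ℝ, Tendsto (fun k => g^[k] y) atTop (𝓝 y_g))
    (hcond1 : ∀ x ∈ K, ψ (F x) = g (ψ x))
    (hcond2 : ∀ x ∈ K, ψ x = y_g → x = x_g) :
    ∀ x ∈ K, Tendsto (fun k => F^[k] x) atTop (𝓝 x_g) :=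
  stmt0_general n m K hKc F hF ψ hψ g x_g y_g hg hcond1 hcond2
end

section
/- Let n m : ℕ, let K ⊆ (Fin n → ℝ), let F : (Fin n → ℝ) → (Fin n → ℝ), ψ : (Fin n → ℝ) → (Fin m → ℝ), g : (Fin m → ℝ) → (Fin m → ℝ), let x_g ∈ K and y_g : Fin m → ℝ. Assume: (i) g(y_g) = y_g (the goal is an equilibrium of the latent dynamics); (ii) ψ(F(x)) = g(ψ(x)) for every x ∈ K (stability condition 1); (iii) for every x ∈ K with x ≠ x_g, ψ(F(x)) ≠ ψ(x) (consecutive latent states along a task trajectory are distinct away from the goal). Then for every x ∈ K, ψ(x) = y_g implies x = x_g (stability condition 2). -/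
theorem stmt1_general (n m : ℕ) (K : Set (Fin n → ℝ))
    (F : (Fin n → ℝ) → (Fin n → ℝ))
    (ψ : (Fin n → ℝ) → (Fin m → ℝ))
    (g : (Fin m → ℝ) → (Fin m → ℝ)) (x_g : Fin n → ℝ)
    (y_g : Fin m → ℝ)
    (hfix : g y_g = y_g)
    (hcond1 : ∀ x ∈ K, ψ (F x) = g (ψ x))
    (hsep : ∀ x ∈ K, x ≠ x_g → ψ (F x) ≠ ψ x) :
    ∀ x ∈ K, ψ x = y_g → x = x_g := by
  intro x hx hψ
  by_contra hne
  exact hsep x hx hne (by rw [hcond1 x hx, hψ, hfix])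

theorem stmt1 (n m : ℕ) (K : Set (Fin n → ℝ))
    (F : (Fin n → ℝ) → (Fin n → ℝ))
    (ψ : (Fin n → ℝ) → (Fin m → ℝ))
    (g : (Fin m → ℝ) → (Fin m → ℝ)) (x_g : Fin n → ℝ) (hxg : x_g ∈ K)
    (y_g : Fin m → ℝ)
    (hfix : g y_g = y_g)
    (hcond1 : ∀ x ∈ K, ψ (F x) = g (ψ x))
    (hsep : ∀ x ∈ K, x ≠ x_g → ψ (F x) ≠ ψ x) :
    ∀ x ∈ K, ψ x = y_g → x = x_g :=
  stmt1_general n m K F ψ g x_g y_g hfix hcond1 hsep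
end

section
/- Let n m : ℕ, let K ⊆ (Fin n → ℝ) be a nonempty compact set, let F : (Fin n → ℝ) → (Fin n → ℝ) satisfy F(K) ⊆ K, let ψ : (Fin n → ℝ) → (Fin m → ℝ) be continuous on K, let g : (Fin m → ℝ) → (Fin m → ℝ), let x_g ∈ K and y_g : Fin m → ℝ. Assume (i) for every y the iterates g^[k](y) converge to y_g, (ii) ψ(F(x)) = g(ψ(x)) for every x ∈ K, and (iii) for every x ∈ K, ψ(x) = y_g implies x = x_g. Then ψ(x_g) = y_g, i.e. the latent mapping sends the task-space goal to the latent goal. -/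
/-!
Follow the `F`-orbit of `x_g`. Its image under `ψ` is the `g`-orbit of `ψ x_g`, which tends to
`y_g`; since it stays in the compact, hence closed, set `ψ '' K`, the goal `y_g` is `ψ x'` for
some `x' ∈ K`. Injectivity of `ψ` over `y_g` forces `x' = x_g`.
-/

open Filter Topology Set

theorem Set.MapsTo.apply_iterate_eq_iterate_apply {α β : Type*} {K : Set α} {F : α → α}
    {ψ : α → β} {g : β → β} (hF : MapsTo F K K) (hψ : ∀ x ∈ K, ψ (F x) = g (ψ x))
    {x : α} (hx : x ∈ K) (k : ℕ) : ψ (F^[k] x) = g^[k] (ψ x) := by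
  induction k with
  | zero => rfl
  | succ k ih =>
    rw [Function.iterate_succ_apply', Function.iterate_succ_apply',
      hψ _ (hF.iterate k hx), ih]

theorem IsCompact.mem_image_of_tendsto {X Y ι : Type*} [TopologicalSpace X]
    [TopologicalSpace Y] [T2Space Y] {K : Set X} {ψ : X → Y} {l : Filter ι} [l.NeBot]
    {u : ι → X} {y : Y} (hK : IsCompact K) (hψ : ContinuousOn ψ K) (hu : ∀ᶠ i in l, u i ∈ K)
    (hlim : Tendsto (fun i => ψ (u i)) l (𝓝 y)) : y ∈ ψ '' K :=
  (hK.image_of_continuousOn hψ).isClosed.mem_of_tendsto hlim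
    (hu.mono fun _ hi => mem_image_of_mem ψ hi)

theorem stmt4_general (n m : ℕ) (K : Set (Fin n → ℝ)) (hKc : IsCompact K)
    (F : (Fin n → ℝ) → (Fin n → ℝ)) (hF : Set.MapsTo F K K)
    (ψ : (Fin n → ℝ) → (Fin m → ℝ)) (hψ : ContinuousOn ψ K)
    (g : (Fin m → ℝ) → (Fin m → ℝ)) (x_g : Fin n → ℝ) (hxg : x_g ∈ K)
    (y_g : Fin m → ℝ)
    (hg : ∀ y : Fin m → ℝ, Tendsto (fun k => g^[k] y) atTop (𝓝 y_g))
    (hcond1 : ∀ x ∈ K, ψ (F x) = g (ψ x))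
    (hcond2 : ∀ x ∈ K, ψ x = y_g → x = x_g) :
    ψ x_g = y_g := by
  have horbit : Tendsto (fun k => ψ (F^[k] x_g)) atTop (𝓝 y_g) := by
    simpa only [hF.apply_iterate_eq_iterate_apply hcond1 hxg] using hg (ψ x_g)
  obtain ⟨x', hx'K, hx'⟩ := hKc.mem_image_of_tendsto hψ
    (Eventually.of_forall fun k => hF.iterate k hxg) horbit
  rwa [← hcond2 x' hx'K hx']

theorem stmt4 (n m : ℕ) (K : Set (Fin n → ℝ)) (hKne : K.Nonempty) (hKc : IsCompact K)
    (F : (Fin n → ℝ) → (Fin n → ℝ)) (hF : Set.MapsTo F K K)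
    (ψ : (Fin n → ℝ) → (Fin m → ℝ)) (hψ : ContinuousOn ψ K)
    (g : (Fin m → ℝ) → (Fin m → ℝ)) (x_g : Fin n → ℝ) (hxg : x_g ∈ K)
    (y_g : Fin m → ℝ)
    (hg : ∀ y : Fin m → ℝ, Tendsto (fun k => g^[k] y) atTop (𝓝 y_g))
    (hcond1 : ∀ x ∈ K, ψ (F x) = g (ψ x))
    (hcond2 : ∀ x ∈ K, ψ x = y_g → x = x_g) :
    ψ x_g = y_g :=
  stmt4_general n m K hKc F hF ψ hψ g x_g hxg y_g hg hcond1 hcond2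
end

section
/- Let n m : ℕ, Δt : ℝ, and let ψ : (Fin n → ℝ) → (Fin m → ℝ), φ : (Fin m → ℝ) → (Fin n → ℝ), g : (Fin m → ℝ) → (Fin m → ℝ). Define F : (Fin n → ℝ) → (Fin n → ℝ) by F(x) = x + Δt • φ(ψ(x)), and assume ψ(F(x)) = g(ψ(x)) for every x. Then for any a b : Fin n → ℝ with ψ(a) = ψ(b), one has F^[k](a) - F^[k](b) = a - b for every k : ℕ. -/
/-! Along an orbit of `F x = x + v (ψ x)` the increment depends only on `ψ`, and the semiconjugacy
`ψ ∘ F = g ∘ ψ` keeps two points with equal `ψ`-images in a common fibre of `ψ` forever. Hence both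
orbits receive the same increments at every step, and their difference never changes. -/

open Function

section

variable {G α : Type*} [AddGroup G] {F : G → G} {ψ : G → α} {v : α → G}

theorem sub_eq_of_eq_add_comp (hF : ∀ x, F x = x + v (ψ x)) {a b : G} (hab : ψ a = ψ b) :
    F a - F b = a - b := by
  rw [hF, hF, hab, add_sub_add_right_eq_sub]

theorem Function.Semiconj.iterate_sub_iterate_eq_sub {g : α → α} (hF : ∀ x, F x = x + v (ψ x))
    (hψ : Semiconj ψ F g) {a b : G} (hab : ψ a = ψ b) (k : ℕ) :
    F^[k] a - F^[k] b = a - b := by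
  induction k with
  | zero => rfl
  | succ k ih =>
    have hfibre : ψ (F^[k] a) = ψ (F^[k] b) := by
      rw [(hψ.iterate_right k).eq, (hψ.iterate_right k).eq, hab]
    rw [iterate_succ_apply', iterate_succ_apply', sub_eq_of_eq_add_comp hF hfibre, ih]

end

theorem stmt5 (n m : ℕ) (Δt : ℝ)
    (ψ : (Fin n → ℝ) → (Fin m → ℝ)) (φ : (Fin m → ℝ) → (Fin n → ℝ))
    (g : (Fin m → ℝ) → (Fin m → ℝ))
    (F : (Fin n → ℝ) → (Fin n → ℝ))
    (hFdef : ∀ x, F x = x + Δt • φ (ψ x))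
    (hcond1 : ∀ x, ψ (F x) = g (ψ x))
    (a b : Fin n → ℝ) (hab : ψ a = ψ b) :
    ∀ k : ℕ, F^[k] a - F^[k] b = a - b :=
  Semiconj.iterate_sub_iterate_eq_sub (v := fun y => Δt • φ y) hFdef hcond1 hab
end

section
/- Let n m : ℕ, Δt : ℝ, let K ⊆ (Fin n → ℝ) be a nonempty compact set, let ψ : (Fin n → ℝ) → (Fin m → ℝ) be continuous on K, φ : (Fin m → ℝ) → (Fin n → ℝ), g : (Fin m → ℝ) → (Fin m → ℝ), x_g ∈ K, y_g : Fin m → ℝ. Define F(x) = x + Δt • φ(ψ(x)) and assume F(K) ⊆ K. Assume (i) for every y the iterates g^[k](y) converge to y_g, (ii) ψ(F(x)) = g(ψ(x)) for every x ∈ K, and (iii) for every x ∈ K, ψ(x) = y_g implies x = x_g. Then the restriction of ψ to K is a homeomorphism from K onto its image ψ(K) ⊆ (Fin m → ℝ). -/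
/-!
Along an orbit of `F` the latent point evolves by `g` and so tends to `y_g`; by compactness every
cluster point of the orbit lies in the fibre of `ψ` over `y_g`, which is `{x_g}`, so every orbit in
`K` converges to `x_g`. If `ψ x = ψ x'`, the two orbits receive the same increments
`Δt • φ (ψ ·)` at every step, so `F^[k] x - F^[k] x' = x - x'` for all `k`; letting `k → ∞` gives
`x - x' = x_g - x_g = 0`. Hence `ψ` is injective on `K`, and a continuous injection of a compact
space into a Hausdorff space is a homeomorphism onto its image.
-/

open Filter Topology Set

theorem IsCompact.tendsto_of_tendsto_comp_of_fiber_subset {ι X Y : Type*} [TopologicalSpace X]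
    [TopologicalSpace Y] [T2Space Y] {K : Set X} (hK : IsCompact K) {ψ : X → Y}
    (hψ : ContinuousOn ψ K) {y : Y} {x₀ : X} (hfiber : ∀ a ∈ K, ψ a = y → a = x₀)
    {l : Filter ι} {u : ι → X} (hu : ∀ᶠ i in l, u i ∈ K) (hψu : Tendsto (ψ ∘ u) l (𝓝 y)) :
    Tendsto u l (𝓝 x₀) := by
  refine hK.tendsto_nhds_of_unique_mapClusterPt hu fun a ha hclus => hfiber a ha ?_
  have hψa : MapClusterPt (ψ a) l (ψ ∘ u) :=
    hclus.tendsto_comp' ((hψ a ha).mono_left (inf_le_inf_left _ (tendsto_principal.2 hu)))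
  exact eq_of_nhds_neBot (hψa.clusterPt.mono hψu)

theorem IsCompact.exists_homeomorph_image_of_injOn {X Y : Type*} [TopologicalSpace X]
    [TopologicalSpace Y] [T2Space Y] {K : Set X} (hK : IsCompact K) {ψ : X → Y}
    (hψ : ContinuousOn ψ K) (hinj : InjOn ψ K) :
    ∃ e : K ≃ₜ ψ '' K, ∀ x : K, (e x : Y) = ψ x := by
  have : CompactSpace K := isCompact_iff_compactSpace.mp hK
  let e : K ≃ ψ '' K := Equiv.Set.imageOfInjOn ψ K hinj
  have he : Continuous e := hψ.domRestrict.subtype_mk _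
  exact ⟨he.homeoOfEquivCompactToT2, fun _ => rfl⟩

section Semiconj

variable {X Y : Type*} {F : X → X} {g : Y → Y} {ψ : X → Y} {K : Set X}

theorem apply_iterate_eq_iterate_apply_of_mapsTo (hF : MapsTo F K K)
    (hsemi : ∀ x ∈ K, ψ (F x) = g (ψ x)) {x : X} (hx : x ∈ K) (k : ℕ) :
    ψ (F^[k] x) = g^[k] (ψ x) := by
  induction k with
  | zero => rfl
  | succ k ih =>
    rw [Function.iterate_succ_apply', Function.iterate_succ_apply', hsemi _ (hF.iterate k hx), ih]

theorem tendsto_iterate_of_semiconj_of_fiber_subset [TopologicalSpace X] [TopologicalSpace Y]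
    [T2Space Y] (hK : IsCompact K) (hψ : ContinuousOn ψ K) (hF : MapsTo F K K)
    (hsemi : ∀ x ∈ K, ψ (F x) = g (ψ x)) {y₀ : Y} (hg : ∀ y, Tendsto (g^[·] y) atTop (𝓝 y₀))
    {x₀ : X} (hfiber : ∀ a ∈ K, ψ a = y₀ → a = x₀) {x : X} (hx : x ∈ K) :
    Tendsto (F^[·] x) atTop (𝓝 x₀) := by
  refine hK.tendsto_of_tendsto_comp_of_fiber_subset hψ hfiber
    (Eventually.of_forall fun k => hF.iterate k hx) ?_
  simpa only [Function.comp_def, apply_iterate_eq_iterate_apply_of_mapsTo hF hsemi hx]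
    using hg (ψ x)

end Semiconj

section Translation

variable {E Y : Type*} [AddCommGroup E] {F : E → E} {g : Y → Y} {ψ : E → Y} {T : Y → E}
  {K : Set E}

theorem iterate_sub_iterate_eq_sub (hFdef : ∀ x, F x = x + T (ψ x)) {x x' : E}
    (h : ∀ k, ψ (F^[k] x) = ψ (F^[k] x')) (k : ℕ) : F^[k] x - F^[k] x' = x - x' := by
  induction k with
  | zero => rfl
  | succ k ih =>
    rw [Function.iterate_succ_apply', Function.iterate_succ_apply', hFdef, hFdef, h k,
      add_sub_add_right_eq_sub, ih]

theorem injOn_of_semiconj_of_fiber_subset [TopologicalSpace E] [IsTopologicalAddGroup E]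
    [T2Space E] [TopologicalSpace Y] [T2Space Y] (hK : IsCompact K) (hψ : ContinuousOn ψ K)
    (hFdef : ∀ x, F x = x + T (ψ x)) (hF : MapsTo F K K) (hsemi : ∀ x ∈ K, ψ (F x) = g (ψ x))
    {y₀ : Y} (hg : ∀ y, Tendsto (g^[·] y) atTop (𝓝 y₀)) {x₀ : E}
    (hfiber : ∀ a ∈ K, ψ a = y₀ → a = x₀) : InjOn ψ K := by
  intro x hx x' hx' hψx
  have hsame : ∀ k, ψ (F^[k] x) = ψ (F^[k] x') := fun k => by
    rw [apply_iterate_eq_iterate_apply_of_mapsTo hF hsemi hx,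
      apply_iterate_eq_iterate_apply_of_mapsTo hF hsemi hx', hψx]
  have hlim : Tendsto (fun k => F^[k] x - F^[k] x') atTop (𝓝 (x₀ - x₀)) :=
    (tendsto_iterate_of_semiconj_of_fiber_subset hK hψ hF hsemi hg hfiber hx).sub
      (tendsto_iterate_of_semiconj_of_fiber_subset hK hψ hF hsemi hg hfiber hx')
  simp only [iterate_sub_iterate_eq_sub hFdef hsame, sub_self, tendsto_const_nhds_iff] at hlim
  exact sub_eq_zero.mp hlim

end Translation

theorem stmt7_general (n m : ℕ) (Δt : ℝ) (K : Set (Fin n → ℝ))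
    (hKc : IsCompact K)
    (ψ : (Fin n → ℝ) → (Fin m → ℝ)) (hψ : ContinuousOn ψ K)
    (φ : (Fin m → ℝ) → (Fin n → ℝ))
    (g : (Fin m → ℝ) → (Fin m → ℝ)) (x_g : Fin n → ℝ)
    (y_g : Fin m → ℝ)
    (F : (Fin n → ℝ) → (Fin n → ℝ))
    (hFdef : ∀ x, F x = x + Δt • φ (ψ x))
    (hF : Set.MapsTo F K K)
    (hg : ∀ y : Fin m → ℝ, Tendsto (fun k => g^[k] y) atTop (𝓝 y_g))
    (hcond1 : ∀ x ∈ K, ψ (F x) = g (ψ x))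
    (hcond2 : ∀ x ∈ K, ψ x = y_g → x = x_g) :
    ∃ e : K ≃ₜ (ψ '' K), ∀ x : K, (e x : Fin m → ℝ) = ψ (x : Fin n → ℝ) :=
  hKc.exists_homeomorph_image_of_injOn hψ <|
    injOn_of_semiconj_of_fiber_subset (T := fun y => Δt • φ y) hKc hψ hFdef hF hcond1 hg hcond2

theorem stmt7 (n m : ℕ) (Δt : ℝ) (K : Set (Fin n → ℝ)) (hKne : K.Nonempty)
    (hKc : IsCompact K)
    (ψ : (Fin n → ℝ) → (Fin m → ℝ)) (hψ : ContinuousOn ψ K)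
    (φ : (Fin m → ℝ) → (Fin n → ℝ))
    (g : (Fin m → ℝ) → (Fin m → ℝ)) (x_g : Fin n → ℝ) (hxg : x_g ∈ K)
    (y_g : Fin m → ℝ)
    (F : (Fin n → ℝ) → (Fin n → ℝ))
    (hFdef : ∀ x, F x = x + Δt • φ (ψ x))
    (hF : Set.MapsTo F K K)
    (hg : ∀ y : Fin m → ℝ, Tendsto (fun k => g^[k] y) atTop (𝓝 y_g))
    (hcond1 : ∀ x ∈ K, ψ (F x) = g (ψ x))
    (hcond2 : ∀ x ∈ K, ψ x = y_g → x = x_g) :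
    ∃ e : K ≃ₜ (ψ '' K), ∀ x : K, (e x : Fin m → ℝ) = ψ (x : Fin n → ℝ) :=
  stmt7_general n m Δt K hKc ψ hψ φ g x_g y_g F hFdef hF hg hcond1 hcond2
end

section
/- Let m : ℕ, Δt ε : ℝ with Δt > 0 and ε > 0, let y_g : Fin m → ℝ, and let α : (Fin m → ℝ) → (Fin m → ℝ) satisfy ε ≤ α(y) i ≤ 2/Δt - ε for all y and i. Define T : (Fin m → ℝ) → (Fin m → ℝ) by T(y) i = y i + Δt * (α(y) i * (y_g i - y i)). Then for every y : Fin m → ℝ, every k : ℕ, and every i : Fin m, |T^[k](y) i - y_g i| ≤ (1 - ε*Δt)^k * |y i - y_g i|; in particular T^[k](y) converges to y_g as k → ∞. -/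
/-! Each coordinate of the error obeys `T y i - y_g i = (1 - Δt α(y) i) (y i - y_g i)`, and the gain
bounds force `|1 - Δt α(y) i| ≤ 1 - ε Δt` whatever the state. So every Euler step contracts each
coordinate of the error by the fixed factor `1 - ε Δt < 1`, and the iterates converge geometrically. -/

open Filter Topology

theorem abs_one_sub_mul_le_one_sub_mul {Δt ε a : ℝ} (hΔt : 0 < Δt)
    (ha : ε ≤ a ∧ a ≤ 2 / Δt - ε) : |1 - Δt * a| ≤ 1 - ε * Δt := by
  have hupper : Δt * a ≤ 2 - ε * Δt := by
    calc Δt * a ≤ Δt * (2 / Δt - ε) := mul_le_mul_of_nonneg_left ha.2 hΔt.le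
      _ = 2 - ε * Δt := by field_simp
  have hlower : ε * Δt ≤ Δt * a := by nlinarith [ha.1]
  rw [abs_le]
  constructor <;> linarith

theorem iterate_le_pow_mul {X : Type*} {f : X → X} {d : X → ℝ} {c : ℝ} (hc : 0 ≤ c)
    (hf : ∀ x, d (f x) ≤ c * d x) (k : ℕ) (x : X) : d (f^[k] x) ≤ c ^ k * d x := by
  induction k with
  | zero => simp
  | succ k ih =>
    calc d (f^[k + 1] x) = d (f (f^[k] x)) := by rw [Function.iterate_succ_apply']
      _ ≤ c * d (f^[k] x) := hf _
      _ ≤ c * (c ^ k * d x) := mul_le_mul_of_nonneg_left ih hc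
      _ = c ^ (k + 1) * d x := by ring

theorem tendsto_of_dist_le_pow_mul {X : Type*} [PseudoMetricSpace X] {x : ℕ → X} {a : X}
    {c C : ℝ} (hc₀ : 0 ≤ c) (hc₁ : c < 1) (hx : ∀ k, dist (x k) a ≤ c ^ k * C) :
    Tendsto x atTop (𝓝 a) := by
  have hgeom : Tendsto (fun k : ℕ => c ^ k * C) atTop (𝓝 0) := by
    simpa using (tendsto_pow_atTop_nhds_zero_of_lt_one hc₀ hc₁).mul_const C
  exact tendsto_iff_dist_tendsto_zero.2 (squeeze_zero (fun _ => dist_nonneg) hx hgeom)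

theorem stmt9 (m : ℕ) (Δt ε : ℝ) (hΔt : 0 < Δt) (hε : 0 < ε)
    (y_g : Fin m → ℝ)
    (α : (Fin m → ℝ) → (Fin m → ℝ))
    (hα : ∀ y i, ε ≤ α y i ∧ α y i ≤ 2 / Δt - ε)
    (T : (Fin m → ℝ) → (Fin m → ℝ))
    (hT : ∀ y i, T y i = y i + Δt * (α y i * (y_g i - y i))) :
    ∀ y : Fin m → ℝ,
      (∀ (k : ℕ) (i : Fin m),
        |T^[k] y i - y_g i| ≤ (1 - ε * Δt) ^ k * |y i - y_g i|) ∧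
      Tendsto (fun k => T^[k] y) atTop (𝓝 y_g) := by
  intro y
  have hfactor (z : Fin m → ℝ) (i : Fin m) : |1 - Δt * α z i| ≤ 1 - ε * Δt :=
    abs_one_sub_mul_le_one_sub_mul hΔt (hα z i)
  have hstep (i : Fin m) (z : Fin m → ℝ) :
      |T z i - y_g i| ≤ (1 - ε * Δt) * |z i - y_g i| := by
    have herror : T z i - y_g i = (1 - Δt * α z i) * (z i - y_g i) := by rw [hT]; ring
    rw [herror, abs_mul]
    exact mul_le_mul_of_nonneg_right (hfactor z i) (abs_nonneg _)
  have hc₀ (i : Fin m) : 0 ≤ 1 - ε * Δt := (abs_nonneg _).trans (hfactor y i)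
  have hc₁ : 1 - ε * Δt < 1 := by linarith [mul_pos hε hΔt]
  have hbound (k : ℕ) (i : Fin m) : |T^[k] y i - y_g i| ≤ (1 - ε * Δt) ^ k * |y i - y_g i| :=
    iterate_le_pow_mul (d := fun z => |z i - y_g i|) (hc₀ i) (hstep i) k y
  refine ⟨hbound, tendsto_pi_nhds.2 fun i => ?_⟩
  exact tendsto_of_dist_le_pow_mul (hc₀ i) hc₁ fun k => by
    simpa only [Real.dist_eq] using hbound k i
end

section
/- Let m : ℕ, let y_g : Fin m → ℝ, let α : (Fin m → ℝ) → (Fin m → ℝ) satisfy α(z) i > 0 for all z and i, and let y : ℝ → (Fin m → ℝ) be such that for every i : Fin m and t : ℝ, the function t ↦ y(t) i is differentiable with derivative equal to -(α(y(t)) i) * (y(t) i - y_g i). Then the function V : ℝ → ℝ defined by V(t) = ∑ i, (y(t) i - y_g i)^2 is antitone (nonincreasing) on ℝ. -/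
/-! Along a solution, `V = ∑ (yᵢ - y_gᵢ)²` has derivative `-2 ∑ αᵢ(y) (yᵢ - y_gᵢ)² ≤ 0`, so the
mean value theorem makes `V` nonincreasing. -/

theorem hasDerivAt_sum_sub_sq {ι : Type*} [Fintype ι] {y : ℝ → ι → ℝ} {y' c : ι → ℝ} {t : ℝ}
    (hy : ∀ i, HasDerivAt (fun s => y s i) (y' i) t) :
    HasDerivAt (fun s => ∑ i, (y s i - c i) ^ 2) (∑ i, 2 * (y t i - c i) * y' i) t := by
  refine HasDerivAt.fun_sum fun i _ => ?_
  simpa using ((hy i).sub_const (c i)).fun_pow 2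

theorem antitone_sum_sub_sq_of_hasDerivAt {ι : Type*} [Fintype ι] {y y' : ℝ → ι → ℝ}
    {c : ι → ℝ} (hy : ∀ i t, HasDerivAt (fun s => y s i) (y' t i) t)
    (hy' : ∀ t i, (y t i - c i) * y' t i ≤ 0) :
    Antitone (fun t => ∑ i, (y t i - c i) ^ 2) := by
  refine antitone_of_hasDerivAt_nonpos (fun t => hasDerivAt_sum_sub_sq (hy · t)) fun t => ?_
  refine Finset.sum_nonpos fun i _ => ?_
  linarith [hy' t i]

theorem stmt11 (m : ℕ) (y_g : Fin m → ℝ)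
    (α : (Fin m → ℝ) → (Fin m → ℝ)) (hα : ∀ z i, 0 < α z i)
    (y : ℝ → (Fin m → ℝ))
    (hy : ∀ (i : Fin m) (t : ℝ),
      HasDerivAt (fun s => y s i) (-(α (y t) i) * (y t i - y_g i)) t) :
    Antitone (fun t : ℝ => ∑ i, (y t i - y_g i) ^ 2) := by
  refine antitone_sum_sub_sq_of_hasDerivAt hy fun t i => ?_
  have h := mul_nonneg (hα (y t) i).le (sq_nonneg (y t i - y_g i))
  linarith
end

section
/- Let m : ℕ, ε : ℝ with ε > 0, let y_g : Fin m → ℝ, let α : (Fin m → ℝ) → (Fin m → ℝ) satisfy α(z) i ≥ ε for all z and i, and let y : ℝ → (Fin m → ℝ) be such that for every i : Fin m and t : ℝ, the function t ↦ y(t) i is differentiable with derivative equal to -(α(y(t)) i) * (y(t) i - y_g i). Then for every t ≥ 0, ∑ i, (y(t) i - y_g i)^2 ≤ Real.exp (-2*ε*t) * ∑ i, (y(0) i - y_g i)^2; in particular y(t) converges to y_g as t → ∞. -/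
/-!
The squared distance `V = ∑ i, (y i - y_g i) ^ 2` is a Lyapunov function: along the flow
`V' = -2 ∑ i, α_i (y i - y_g i) ^ 2 ≤ -2 ε V`, so Grönwall's inequality gives
`V t ≤ exp (-2 ε t) V 0`, and the exponential decay of `V` forces every coordinate to converge.
-/

open Filter Topology

theorem le_exp_mul_of_hasDerivAt_le_mul {V V' : ℝ → ℝ} {K : ℝ}
    (hV : ∀ t, HasDerivAt V (V' t) t) (hle : ∀ t, V' t ≤ K * V t) {t : ℝ} (ht : 0 ≤ t) :
    V t ≤ Real.exp (K * t) * V 0 := by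
  have hcont : ContinuousOn V (Set.Icc 0 t) := fun s _ => (hV s).continuousAt.continuousWithinAt
  have := le_gronwallBound_of_liminf_deriv_right_le (K := K) (ε := 0) hcont
    (fun s _ _ hr => (hV s).hasDerivWithinAt.liminf_right_slope_le hr) le_rfl
    (fun s _ => by simpa using hle s) t ⟨ht, le_rfl⟩
  rwa [gronwallBound_ε0, sub_zero, mul_comm] at this

theorem hasDerivAt_sum_sq_sub {ι : Type*} [Fintype ι] {y : ℝ → ι → ℝ} {y' g : ι → ℝ} {t : ℝ}
    (hy : ∀ i, HasDerivAt (fun s => y s i) (y' i) t) :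
    HasDerivAt (fun s => ∑ i, (y s i - g i) ^ 2) (∑ i, 2 * (y t i - g i) * y' i) t := by
  refine HasDerivAt.fun_sum fun i _ => ?_
  simpa using ((hy i).sub_const (g i)).fun_pow 2

theorem sum_mul_neg_mul_le {ι : Type*} [Fintype ι] {a d : ι → ℝ} {ε : ℝ} (ha : ∀ i, ε ≤ a i) :
    ∑ i, 2 * d i * (-a i * d i) ≤ -2 * ε * ∑ i, d i ^ 2 := by
  rw [Finset.mul_sum]
  refine Finset.sum_le_sum fun i _ => ?_
  nlinarith [ha i, sq_nonneg (d i)]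

theorem tendsto_pi_of_sum_sq_sub_tendsto_zero {α ι : Type*} [Fintype ι] {l : Filter α}
    {y : α → ι → ℝ} {g : ι → ℝ} (h : Tendsto (fun t => ∑ i, (y t i - g i) ^ 2) l (𝓝 0)) :
    Tendsto y l (𝓝 g) := by
  refine tendsto_pi_nhds.2 fun i => ?_
  have hsq : Tendsto (fun t => (y t i - g i) ^ 2) l (𝓝 0) :=
    squeeze_zero (fun t => sq_nonneg _)
      (fun t => Finset.single_le_sum (fun j _ => sq_nonneg (y t j - g j)) (Finset.mem_univ i)) h
  rw [tendsto_iff_norm_sub_tendsto_zero]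
  simpa [Real.sqrt_sq_eq_abs] using hsq.sqrt

theorem stmt12 (m : ℕ) (ε : ℝ) (hε : 0 < ε) (y_g : Fin m → ℝ)
    (α : (Fin m → ℝ) → (Fin m → ℝ)) (hα : ∀ z i, ε ≤ α z i)
    (y : ℝ → (Fin m → ℝ))
    (hy : ∀ (i : Fin m) (t : ℝ),
      HasDerivAt (fun s => y s i) (-(α (y t) i) * (y t i - y_g i)) t) :
    (∀ t : ℝ, 0 ≤ t →
      ∑ i, (y t i - y_g i) ^ 2 ≤ Real.exp (-2 * ε * t) * ∑ i, (y 0 i - y_g i) ^ 2) ∧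
    Tendsto y atTop (𝓝 y_g) := by
  have hdecay : ∀ t : ℝ, 0 ≤ t →
      ∑ i, (y t i - y_g i) ^ 2 ≤ Real.exp (-2 * ε * t) * ∑ i, (y 0 i - y_g i) ^ 2 :=
    fun t ht => le_exp_mul_of_hasDerivAt_le_mul (fun s => hasDerivAt_sum_sq_sub (hy · s))
      (fun s => sum_mul_neg_mul_le (hα (y s))) ht
  have hexp : Tendsto (fun t => Real.exp (-2 * ε * t)) atTop (𝓝 0) :=
    Real.tendsto_exp_atBot.comp <| tendsto_id.const_mul_atTop_of_neg (by linarith)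
  refine ⟨hdecay, tendsto_pi_of_sum_sq_sub_tendsto_zero ?_⟩
  refine squeeze_zero' (.of_forall fun t => Finset.sum_nonneg fun i _ => sq_nonneg _)
    ((eventually_ge_atTop 0).mono hdecay) ?_
  simpa using hexp.mul_const (∑ i, (y 0 i - y_g i) ^ 2)
end
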